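/- Let k be a field of characteristic zero, let A be a polynomial ring over k in finitely many variables, and let I ⊆ K be ideals of A such that A/I is a smooth k-algebra. Then the restriction map Hom_A(K, A/K) → Hom_A(I, A/K) is surjective: every A-linear map I → A/K extends to an A-linear map K → A/K. -/

import Mathlib

set_option maxHeartbeats 1200000

open TensorProduct KaehlerDifferential

/-- Let `k` be a field of characteristic zero, `A` a polynomial ring over
`k` in finitely many variables, and `I ⊆ K` ideals of `A` such that `A/I` is a smooth
`k`-algebra. Then the restriction map `Hom_A(K, A/K) → Hom_A(I, A/K)` is surjective:
every `A`-linear map `I → A/K` extends to an `A`-linear map `K → A/K`. -/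
theorem fibers_stmt6 {k : Type*} [Field k] [CharZero k] (n : ℕ)
    (I K : Ideal (MvPolynomial (Fin n) k)) (hIK : I ≤ K)
    (hI : Algebra.Smooth k (MvPolynomial (Fin n) k ⧸ I))
    (g : ↥I →ₗ[MvPolynomial (Fin n) k] (MvPolynomial (Fin n) k ⧸ K)) :
    ∃ f : ↥K →ₗ[MvPolynomial (Fin n) k] (MvPolynomial (Fin n) k ⧸ K),
      ∀ x : ↥I, f (Submodule.inclusion hIK x) = g x := by
  set P := MvPolynomial (Fin n) k with hP
  set S := P ⧸ I with hS
  -- Key vanishing: elements of K kill P⧸K.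
  have hKkill : ∀ r ∈ K, ∀ q : P ⧸ K, r • q = 0 := by
    intro r hr q
    obtain ⟨b, rfl⟩ := Submodule.Quotient.mk_surjective _ q
    rw [← Submodule.Quotient.mk_smul, smul_eq_mul]
    exact (Submodule.Quotient.mk_eq_zero _).mpr (K.mul_mem_right b hr)
  have hf : Function.Surjective (algebraMap P S) := Ideal.Quotient.mk_surjective
  have hJI : RingHom.ker (algebraMap P S) ≤ I := by
    rw [Ideal.Quotient.algebraMap_eq, Ideal.mk_ker]
  haveI : Algebra.FormallySmooth k P :=
    Algebra.FormallySmooth.of_equiv (MvPolynomial.renameEquiv k (Equiv.ulift.{0} (α := Fin n)))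
  haveI : Algebra.FormallySmooth k S := hI.1
  set J := RingHom.ker (algebraMap P S) with hJ
  obtain ⟨l, hl⟩ := (Algebra.FormallySmooth.iff_split_injection hf).mp ‹_›
  let g' : ↥J →ₗ[P] P ⧸ K := g ∘ₗ Submodule.inclusion hJI
  have hg' : (J • (⊤ : Submodule P ↥J)) ≤ LinearMap.ker g' := by
    rw [Submodule.smul_le]
    intro r hr x _
    rw [LinearMap.mem_ker, map_smul]
    exact hKkill r (hIK (hJI hr)) _
  let G : J.Cotangent →ₗ[P] P ⧸ K := Submodule.liftQ _ g' hg'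
  refine ⟨{ toFun := fun x => G (l ((1 : S) ⊗ₜ[P] KaehlerDifferential.D k P x.1))
            map_add' := ?_
            map_smul' := ?_ }, ?_⟩
  · intro x y
    simp [TensorProduct.tmul_add]
  · intro a x
    have hx : (x : P) ∈ K := x.2
    have hleib : KaehlerDifferential.D k P ((a • x : ↥K) : P)
        = a • KaehlerDifferential.D k P (x : P)
          + (x : P) • KaehlerDifferential.D k P a := by
      have : ((a • x : ↥K) : P) = a * (x : P) := rfl
      rw [this, Derivation.leibniz]
    simp only [LinearMap.coe_mk, AddHom.coe_mk, RingHom.id_apply]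
    rw [hleib, TensorProduct.tmul_add, TensorProduct.tmul_smul, TensorProduct.tmul_smul,
      map_add, map_smul, map_smul, map_add, map_smul, map_smul,
      hKkill _ hx, add_zero]
  · intro x
    have hxJ : (x : P) ∈ J := by
      rw [hJ, RingHom.mem_ker, Ideal.Quotient.algebraMap_eq,
        Ideal.Quotient.eq_zero_iff_mem]
      exact x.2
    have key : (1 : S) ⊗ₜ[P] KaehlerDifferential.D k P (x : P)
        = kerCotangentToTensor k P S (Ideal.toCotangent J ⟨(x : P), hxJ⟩) := rfl
    simp only [LinearMap.coe_mk, AddHom.coe_mk]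
    have : (↑(Submodule.inclusion hIK x) : P) = (x : P) := rfl
    have h2 : l (kerCotangentToTensor k P S (Ideal.toCotangent J ⟨(x : P), hxJ⟩))
        = Ideal.toCotangent J ⟨(x : P), hxJ⟩ := by
      simpa using LinearMap.congr_fun hl (Ideal.toCotangent J ⟨(x : P), hxJ⟩)
    rw [this, key, h2]
    show G (Ideal.toCotangent J ⟨(x : P), hxJ⟩) = g x
    show g' ⟨(x : P), hxJ⟩ = g x
    rfl
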